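/- Let F, G : ℝ → (0,∞) be continuous strictly decreasing functions with F(x), G(x) → ∞ as x → −∞ and F(x), G(x) → 0 as x → ∞, and suppose G is steeper than F. If for some u > 0 equality holds, ∫_ℝ e^{−(G(x−u) − G(x))} dμ_G(x) = ∫_ℝ e^{−(F(x−u) − F(x))} dμ_F(x) < ∞, then G is a translate of F: there exists c ∈ ℝ with G(x) = F(x + c) for all x ∈ ℝ. -/

import Mathlib

open MeasureTheory Filter Set
open scoped ENNReal

/-- Generalized inverse `H⁻¹(a) = inf {x : H x ≤ a}` of a nonincreasing function, with
values in `[-∞,∞]` (`+∞` for the empty set, `-∞` for sets unbounded below). -/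
noncomputable def einv (H : ℝ → ℝ) (a : ℝ) : EReal :=
  sInf (Real.toEReal '' {x : ℝ | H x ≤ a})

/-- `G` is steeper than `F`: for all `0 ≤ a ≤ b`,
`0 ≤ G⁻¹(a) - G⁻¹(b) ≤ F⁻¹(a) - F⁻¹(b)`.  The second inequality is stated in the
cross-added form `G⁻¹(a) + F⁻¹(b) ≤ F⁻¹(a) + G⁻¹(b)` to avoid `∞ - ∞`. -/
def Steeper (F G : ℝ → ℝ) : Prop :=
  ∀ a b : ℝ, 0 ≤ a → a ≤ b →
    einv G b ≤ einv G a ∧ einv G a + einv F b ≤ einv F a + einv G b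

open Classical in
noncomputable def pinv (F : ℝ → ℝ) (a : ℝ) : ℝ :=
  if h : ∃ x, F x = a then h.choose else 0

lemma pinv_eq (F : ℝ → ℝ) {a : ℝ} (h : ∃ x, F x = a) : F (pinv F a) = a := by
  rw [pinv, dif_pos h]; exact h.choose_spec

lemma einv_eq_of_eq {F : ℝ → ℝ} (hF : StrictAnti F) {x a : ℝ} (hx : F x = a) :
    einv F a = (x : EReal) := by
  have hset : {y : ℝ | F y ≤ a} = Ici x := by
    ext y; simp only [mem_setOf_eq, mem_Ici, ← hx, hF.le_iff_ge]
  rw [einv, hset]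
  apply le_antisymm
  · exact sInf_le ⟨x, self_mem_Ici, rfl⟩
  · refine le_sInf ?_
    rintro z ⟨y, hy, rfl⟩
    exact EReal.coe_le_coe_iff.mpr hy

lemma exists_preimage {F : ℝ → ℝ} (hFc : Continuous F)
    (hFbot : Tendsto F atBot atTop) (hFtop : Tendsto F atTop (nhds 0))
    {a : ℝ} (ha : 0 < a) : ∃ x, F x = a := by
  obtain ⟨x₁, hx₁⟩ := (hFbot.eventually (eventually_ge_atTop a)).exists
  obtain ⟨x₂, hx₂⟩ := (hFtop.eventually (Iio_mem_nhds ha)).exists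
  have := intermediate_value_univ x₂ x₁ hFc
  exact this ⟨hx₂.le, hx₁⟩

/-- Let `F, G : ℝ → (0,∞)` be continuous strictly decreasing with `F, G → ∞` at `-∞` and
`F, G → 0` at `+∞`, with `G` steeper than `F`, and let `μ_F`, `μ_G` be the
Lebesgue–Stieltjes measures of `e^{-F}`, `e^{-G}`. If for some `u > 0` the two gap
integrals are equal and finite, then `G` is a translate of `F`. -/
theorem steeper_gap_integral_strict
    (F G : ℝ → ℝ)
    (hFc : Continuous F) (hFanti : StrictAnti F) (hFpos : ∀ x, 0 < F x)
    (hFbot : Tendsto F atBot atTop) (hFtop : Tendsto F atTop (nhds 0))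
    (hGc : Continuous G) (hGanti : StrictAnti G) (hGpos : ∀ x, 0 < G x)
    (hGbot : Tendsto G atBot atTop) (hGtop : Tendsto G atTop (nhds 0))
    (hsteep : Steeper F G)
    (sF sG : StieltjesFunction ℝ)
    (hsF : ∀ x, sF x = Real.exp (-F x)) (hsG : ∀ x, sG x = Real.exp (-G x))
    (u : ℝ) (hu : 0 < u)
    (heq : (∫⁻ x, ENNReal.ofReal (Real.exp (-(G (x - u) - G x))) ∂sG.measure)
        = ∫⁻ x, ENNReal.ofReal (Real.exp (-(F (x - u) - F x))) ∂sF.measure)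
    (hfin : (∫⁻ x, ENNReal.ofReal (Real.exp (-(F (x - u) - F x))) ∂sF.measure) < ⊤) :
    ∃ c : ℝ, ∀ x : ℝ, G x = F (x + c) := by
  have hFsurj : ∀ {a : ℝ}, 0 < a → F (pinv F a) = a :=
    fun ha => pinv_eq F (exists_preimage hFc hFbot hFtop ha)
  have hGsurj : ∀ {a : ℝ}, 0 < a → G (pinv G a) = a :=
    fun ha => pinv_eq G (exists_preimage hGc hGbot hGtop ha)
  set T : ℝ → ℝ := fun x => pinv G (F x) with hTdef
  have hGT : ∀ x, G (T x) = F x := fun x => hGsurj (hFpos x)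
  have hTmono : StrictMono T := by
    intro x y hxy
    have h1 : G (T y) < G (T x) := by rw [hGT, hGT]; exact hFanti hxy
    exact hGanti.lt_iff_gt.mp h1
  have hTsurj : Function.Surjective T := by
    intro y
    refine ⟨pinv F (G y), ?_⟩
    have h1 : F (pinv F (G y)) = G y := hFsurj (hGpos y)
    have h2 : G (T (pinv F (G y))) = G y := by rw [hGT, h1]
    exact hGanti.injective h2
  let e : ℝ ≃o ℝ := StrictMono.orderIsoOfSurjective T hTmono hTsurj
  have heT : ∀ x, e x = T x := fun x => rfl
  have hTcont : Continuous T := by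
    have := OrderIso.continuous e
    exact this
  have hTmeas : Measurable T := hTcont.measurable
  have hFsymm : ∀ y, F (e.symm y) = G y := by
    intro y
    have h1 : G (T (e.symm y)) = F (e.symm y) := hGT _
    rw [← heT, e.apply_symm_apply] at h1
    exact h1.symm
  have hpre : ∀ a b : ℝ, T ⁻¹' Ioc a b = Ioc (e.symm a) (e.symm b) := by
    intro a b
    ext x
    simp only [mem_preimage, mem_Ioc, ← heT]
    exact and_congr (lt_iff_lt_of_le_iff_le e.le_symm_apply.symm) e.le_symm_apply.symm
  have hmap : Measure.map T sF.measure = sG.measure := by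
    refine (Measure.ext_of_Ioc' sG.measure _ (fun a b hab => ?_) (fun a b hab => ?_)).symm
    · rw [sG.measure_Ioc]; exact ENNReal.ofReal_ne_top
    · rw [sG.measure_Ioc, Measure.map_apply hTmeas measurableSet_Ioc, hpre, sF.measure_Ioc]
      simp only [hsF, hsG, hFsymm]
  set hGfun : ℝ → ℝ≥0∞ := fun y => ENNReal.ofReal (Real.exp (-(G (y - u) - G y))) with hGfdef
  set fF : ℝ → ℝ≥0∞ := fun x => ENNReal.ofReal (Real.exp (-(F (x - u) - F x))) with fFdef
  have hGcont : Continuous fun y : ℝ => Real.exp (-(G (y - u) - G y)) :=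
    Real.continuous_exp.comp (((hGc.comp (continuous_id.sub continuous_const)).sub hGc).neg)
  have hGmeas : Measurable hGfun := ENNReal.measurable_ofReal.comp hGcont.measurable
  have hrw : (∫⁻ x, hGfun x ∂sG.measure) = ∫⁻ x, hGfun (T x) ∂sF.measure := by
    rw [← hmap, lintegral_map hGmeas hTmeas]
  have hkeyle : ∀ x : ℝ, F (x - u) ≤ G (T x - u) := by
    intro x
    have hxu : F x ≤ F (x - u) := (hFanti (show x - u < x by linarith)).le
    have h2 := (hsteep (F x) (F (x - u)) (hFpos x).le hxu).2
    rw [einv_eq_of_eq hFanti (rfl : F x = F x), einv_eq_of_eq hFanti (rfl : F (x - u) = F (x - u)),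
        einv_eq_of_eq hGanti (hGT x), einv_eq_of_eq hGanti (hGsurj (hFpos (x - u)))] at h2
    have h2' : T x + (x - u) ≤ x + pinv G (F (x - u)) := by exact_mod_cast h2
    have h3 : T x - u ≤ pinv G (F (x - u)) := by linarith
    have h4 := hGanti.antitone h3
    rwa [hGsurj (hFpos (x - u))] at h4
  have hptle : ∀ x, hGfun (T x) ≤ fF x := by
    intro x
    apply ENNReal.ofReal_le_ofReal
    apply Real.exp_le_exp.mpr
    have h1 := hkeyle x
    have h2 := hGT x
    linarith
  have hint_eq : (∫⁻ x, hGfun (T x) ∂sF.measure) = ∫⁻ x, fF x ∂sF.measure := by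
    rw [← hrw]; exact heq
  have hTGmeas : Measurable fun x => hGfun (T x) := hGmeas.comp hTmeas
  have hfFcont : Continuous fun x : ℝ => Real.exp (-(F (x - u) - F x)) :=
    Real.continuous_exp.comp (((hFc.comp (continuous_id.sub continuous_const)).sub hFc).neg)
  have hfFmeas : Measurable fF := ENNReal.measurable_ofReal.comp hfFcont.measurable
  have hfin' : (∫⁻ x, hGfun (T x) ∂sF.measure) ≠ ⊤ := by rw [hint_eq]; exact hfin.ne
  have hzero : (∫⁻ x, (fF x - hGfun (T x)) ∂sF.measure) = 0 := by
    rw [lintegral_sub hTGmeas hfin' (ae_of_all _ hptle), hint_eq, tsub_self]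
  have hae0 := (lintegral_eq_zero_iff (hfFmeas.sub hTGmeas)).mp hzero
  have haeeq : (fun x => G (T x - u) - G (T x)) =ᵐ[sF.measure] fun x => F (x - u) - F x := by
    filter_upwards [hae0] with x hx
    have hle : fF x ≤ hGfun (T x) := tsub_eq_zero_iff_le.mp hx
    have heqx : hGfun (T x) = fF x := le_antisymm (hptle x) hle
    have h2 := (ENNReal.ofReal_eq_ofReal_iff (Real.exp_pos _).le (Real.exp_pos _).le).mp heqx
    have h3 := Real.exp_eq_exp.mp h2
    linarith
  haveI hopen : sF.measure.IsOpenPosMeasure := by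
    refine ⟨fun U hU hne h0 => ?_⟩
    obtain ⟨x, hx⟩ := hne
    obtain ⟨ε, hε, hball⟩ := Metric.isOpen_iff.mp hU x hx
    have hsub : Ioc x (x + ε / 2) ⊆ U := by
      intro y hy
      apply hball
      rw [Metric.mem_ball, Real.dist_eq, abs_lt]
      constructor
      · linarith [hy.1]
      · linarith [hy.2]
    have hz : sF.measure (Ioc x (x + ε / 2)) = 0 := measure_mono_null hsub h0
    rw [sF.measure_Ioc, ENNReal.ofReal_eq_zero] at hz
    have hlt : sF x < sF (x + ε / 2) := by
      rw [hsF, hsF]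
      apply Real.exp_lt_exp.mpr
      have := hFanti (show x < x + ε / 2 by linarith)
      linarith
    linarith
  have heqfun : (fun x => G (T x - u) - G (T x)) = fun x => F (x - u) - F x :=
    Measure.eq_of_ae_eq haeeq
      ((hGc.comp (hTcont.sub continuous_const)).sub (hGc.comp hTcont))
      ((hFc.comp (continuous_id.sub continuous_const)).sub hFc)
  have hkey : ∀ x, G (T x - u) = F (x - u) := by
    intro x
    have h1 := congrFun heqfun x
    have h2 := hGT x
    linarith
  have hTshift : ∀ x, T (x - u) = T x - u := by
    intro x
    apply hGanti.injective
    rw [hGT, hkey x]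
  have hmono2 : ∀ {x y : ℝ}, x ≤ y → x - T x ≤ y - T y := by
    intro x y hxy
    rcases eq_or_lt_of_le hxy with rfl | h
    · exact le_rfl
    have hFle : F y ≤ F x := (hFanti h).le
    have h2 := (hsteep (F y) (F x) (hFpos y).le hFle).2
    rw [einv_eq_of_eq hGanti (hGT y), einv_eq_of_eq hFanti (rfl : F x = F x),
        einv_eq_of_eq hFanti (rfl : F y = F y), einv_eq_of_eq hGanti (hGT x)] at h2
    have h2' : T y + x ≤ y + T x := by exact_mod_cast h2
    linarith
  have hstep : ∀ (n : ℕ) (x : ℝ), (x + n * u) - T (x + n * u) = x - T x := by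
    intro n
    induction n with
    | zero => intro x; simp
    | succ n ih =>
      intro x
      have h1 : x + ((n : ℝ) + 1) * u - u = x + n * u := by ring
      have h2 := hTshift (x + ((n : ℝ) + 1) * u)
      rw [h1] at h2
      have h3 := ih x
      push_cast
      linarith
  have hconst : ∀ x : ℝ, x - T x = 0 - T 0 := by
    intro x
    rcases le_total x 0 with hx | hx
    · obtain ⟨n, hn⟩ := exists_nat_ge ((0 - x) / u)
      have hxn : (0 : ℝ) ≤ x + n * u := by
        have := (div_le_iff₀ hu).mp hn
        linarith
      have h1 := hstep n x
      have h2 := hmono2 hxn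
      have h3 := hmono2 hx
      linarith
    · obtain ⟨n, hn⟩ := exists_nat_ge (x / u)
      have hxn : x ≤ 0 + n * u := by
        have := (div_le_iff₀ hu).mp hn
        linarith
      have h1 := hstep n 0
      have h2 := hmono2 hxn
      have h3 := hmono2 hx
      linarith
  refine ⟨-T 0, fun x => ?_⟩
  have hz := hconst (x - T 0)
  have hTz : T (x - T 0) = x := by linarith
  have hfin2 := hGT (x - T 0)
  rw [hTz] at hfin2
  rw [hfin2]
  congr 1
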